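/- Let p_1 and p_2 be truncated Gaussian distributions on [-2,2] with unit variance and means μ_1, μ_2 ∈ [-1,1], i.e., p_i(x) = 1[x ∈ [-2,2]] · (1/Z_i) exp(-(x-μ_i)²/2) where Z_i is the normalization constant. Then sup_{x ∈ [-2,2]} |p_1(x) - p_2(x)| ≤ 36 · D_KL(p_1‖p_2)^{1/6}. -/

import Mathlib

open MeasureTheory Real

/-- The normalization constant of a unit-variance Gaussian truncated to `[-2,2]`. -/
noncomputable def truncGaussZ (m : ℝ) : ℝ := ∫ x in (-2 : ℝ)..2, Real.exp (-(x - m) ^ 2 / 2)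

/-- The density of a unit-variance Gaussian with mean `m` truncated to `[-2,2]`. -/
noncomputable def truncGaussPdf (m : ℝ) (x : ℝ) : ℝ :=
  if x ∈ Set.Icc (-2 : ℝ) 2 then Real.exp (-(x - m) ^ 2 / 2) / truncGaussZ m else 0

noncomputable def tg (m x : ℝ) : ℝ := Real.exp (-(x - m) ^ 2 / 2)
noncomputable def tp (m x : ℝ) : ℝ := tg m x / truncGaussZ m

lemma tg_cont (m : ℝ) : Continuous (tg m) := by
  unfold tg; fun_prop

lemma tg_pos (m x : ℝ) : 0 < tg m x := Real.exp_pos _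

lemma tg_le_one (m x : ℝ) : tg m x ≤ 1 := by
  unfold tg; rw [Real.exp_le_one_iff]; nlinarith [sq_nonneg (x - m)]

lemma exp_quad {u : ℝ} (h : -8 ≤ u) : 1 + u + u ^ 2 / 50 ≤ Real.exp u := by
  rcases le_or_gt (-2) u with h2 | h2
  · have h3 : (0:ℝ) ≤ 1 + u / 2 := by linarith
    have h4 := Real.add_one_le_exp (u / 2)
    have h5 : Real.exp u = Real.exp (u / 2) * Real.exp (u / 2) := by
      rw [← Real.exp_add]; ring_nf
    nlinarith [sq_nonneg u]
  · nlinarith [Real.exp_pos u, mul_nonneg (by linarith : (0:ℝ) ≤ -(u+2)) (by linarith : (0:ℝ) ≤ u + 8)]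

lemma exp_lip {a b : ℝ} (ha : 0 ≤ a) (hb : 0 ≤ b) :
    |Real.exp (-a) - Real.exp (-b)| ≤ |a - b| := by
  wlog h : b ≤ a generalizing a b
  · rw [abs_sub_comm, abs_sub_comm a b]; exact this hb ha (le_of_not_ge h)
  have h1 : Real.exp (-a) ≤ Real.exp (-b) := Real.exp_le_exp.mpr (by linarith)
  have h2 : Real.exp (-b) ≤ 1 := Real.exp_le_one_iff.mpr (by linarith)
  have h3 : Real.exp (-a) = Real.exp (-b) * Real.exp (b - a) := by
    rw [← Real.exp_add]; ring_nf
  have h4 := Real.add_one_le_exp (b - a)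
  rw [abs_sub_comm, abs_of_nonneg (sub_nonneg.mpr h1), abs_of_nonneg (sub_nonneg.mpr h)]
  nlinarith [Real.exp_pos (-b)]

lemma tg_lb {m x : ℝ} (hm : m ∈ Set.Icc (-1:ℝ) 1) (hx : x ∈ Set.Icc (-2:ℝ) 2) :
    Real.exp (-(9:ℝ)/2) ≤ tg m x := by
  obtain ⟨hm1, hm2⟩ := hm; obtain ⟨hx1, hx2⟩ := hx
  unfold tg
  apply Real.exp_le_exp.mpr
  nlinarith [sq_nonneg (x - m)]

lemma Z_eq (m : ℝ) : truncGaussZ m = ∫ t in (-2 - m)..(2 - m), Real.exp (-t ^ 2 / 2) := by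
  rw [truncGaussZ, ← intervalIntegral.integral_comp_sub_right (fun t => Real.exp (-t ^ 2 / 2)) m]

lemma Z_le_four (m : ℝ) : truncGaussZ m ≤ 4 := by
  have h := intervalIntegral.integral_mono_on (μ := volume) (a := (-2:ℝ)) (b := 2) (by norm_num)
    ((tg_cont m).intervalIntegrable _ _) intervalIntegrable_const
    (fun x _ => tg_le_one m x)
  simp only [truncGaussZ, tg, intervalIntegral.integral_const, smul_eq_mul] at h ⊢; linarith

lemma Z_lb {m : ℝ} (hm : m ∈ Set.Icc (-1:ℝ) 1) : 5/3 ≤ truncGaussZ m := by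
  obtain ⟨hm1, hm2⟩ := hm
  rw [Z_eq]
  have hc : Continuous fun t : ℝ => Real.exp (-t ^ 2 / 2) := by fun_prop
  have hi : ∀ a b : ℝ, IntervalIntegrable (fun t : ℝ => Real.exp (-t ^ 2 / 2)) volume a b :=
    fun a b => hc.intervalIntegrable a b
  rw [← intervalIntegral.integral_add_adjacent_intervals (b := (-1:ℝ)) (hi _ _) (hi _ _),
      ← intervalIntegral.integral_add_adjacent_intervals (a := (-1:ℝ)) (b := (1:ℝ)) (hi _ _) (hi _ _)]
  have h1 : 0 ≤ ∫ t in (-2 - m)..(-1:ℝ), Real.exp (-t ^ 2 / 2) :=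
    intervalIntegral.integral_nonneg (by linarith) (fun x _ => (Real.exp_pos _).le)
  have h3 : 0 ≤ ∫ t in (1:ℝ)..(2 - m), Real.exp (-t ^ 2 / 2) :=
    intervalIntegral.integral_nonneg (by linarith) (fun x _ => (Real.exp_pos _).le)
  have h2 : (5/3 : ℝ) ≤ ∫ t in (-1:ℝ)..1, Real.exp (-t ^ 2 / 2) := by
    have hpoly : (∫ t in (-1:ℝ)..1, (1 - t ^ 2 / 2)) = 5/3 := by
      rw [intervalIntegral.integral_sub intervalIntegrable_const
        ((intervalIntegral.intervalIntegrable_pow 2).div_const 2)]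
      simp [integral_pow]
      norm_num
    rw [← hpoly]
    apply intervalIntegral.integral_mono_on (by norm_num)
      (by apply IntervalIntegrable.sub intervalIntegrable_const ((intervalIntegral.intervalIntegrable_pow 2).div_const 2))
      (hi _ _)
    intro x _
    have := Real.add_one_le_exp (-x ^ 2 / 2)
    linarith
  linarith

lemma Z_pos {m : ℝ} (hm : m ∈ Set.Icc (-1:ℝ) 1) : 0 < truncGaussZ m := lt_of_lt_of_le (by norm_num) (Z_lb hm)

lemma tg_lip {μ₁ μ₂ : ℝ} (h₁ : μ₁ ∈ Set.Icc (-1:ℝ) 1) (h₂ : μ₂ ∈ Set.Icc (-1:ℝ) 1)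
    {x : ℝ} (hx : x ∈ Set.Icc (-2:ℝ) 2) :
    |tg μ₁ x - tg μ₂ x| ≤ 3 * |μ₁ - μ₂| := by
  obtain ⟨ha1, ha2⟩ := h₁; obtain ⟨hb1, hb2⟩ := h₂; obtain ⟨hx1, hx2⟩ := hx
  have e1 : tg μ₁ x = Real.exp (-((x - μ₁) ^ 2 / 2)) := by unfold tg; ring_nf
  have e2 : tg μ₂ x = Real.exp (-((x - μ₂) ^ 2 / 2)) := by unfold tg; ring_nf
  rw [e1, e2]
  refine le_trans (exp_lip (by positivity) (by positivity)) ?_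
  have e3 : (x - μ₁) ^ 2 / 2 - (x - μ₂) ^ 2 / 2 = (μ₂ - μ₁) * (2 * x - μ₁ - μ₂) / 2 := by ring
  rw [e3, abs_div, abs_mul, abs_sub_comm μ₂ μ₁]
  have h4 : |2 * x - μ₁ - μ₂| ≤ 6 := by rw [abs_le]; constructor <;> linarith
  have h5 : (0:ℝ) ≤ |μ₁ - μ₂| := abs_nonneg _
  calc |μ₁ - μ₂| * |2 * x - μ₁ - μ₂| / |(2:ℝ)| = |μ₁ - μ₂| * |2 * x - μ₁ - μ₂| / 2 := by norm_num
    _ ≤ |μ₁ - μ₂| * 6 / 2 := by gcongr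
    _ = 3 * |μ₁ - μ₂| := by ring

lemma Z_lip {μ₁ μ₂ : ℝ} (h₁ : μ₁ ∈ Set.Icc (-1:ℝ) 1) (h₂ : μ₂ ∈ Set.Icc (-1:ℝ) 1) :
    |truncGaussZ μ₁ - truncGaussZ μ₂| ≤ 12 * |μ₁ - μ₂| := by
  have hsub : truncGaussZ μ₁ - truncGaussZ μ₂ = ∫ x in (-2:ℝ)..2, (tg μ₁ x - tg μ₂ x) := by
    rw [intervalIntegral.integral_sub ((tg_cont μ₁).intervalIntegrable _ _)
      ((tg_cont μ₂).intervalIntegrable _ _)]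
    rfl
  rw [hsub]
  have h := intervalIntegral.norm_integral_le_of_norm_le_const (C := 3 * |μ₁ - μ₂|)
    (f := fun x => tg μ₁ x - tg μ₂ x) (a := (-2:ℝ)) (b := 2) ?_
  · rw [Real.norm_eq_abs] at h
    calc |∫ x in (-2:ℝ)..2, (tg μ₁ x - tg μ₂ x)| ≤ 3 * |μ₁ - μ₂| * |(2:ℝ) - (-2)| := h
      _ = 12 * |μ₁ - μ₂| := by rw [show |(2:ℝ) - (-2)| = 4 by norm_num]; ring
  · intro x hx
    rw [Set.uIoc_of_le (by norm_num : (-2:ℝ) ≤ 2)] at hx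
    exact tg_lip h₁ h₂ ⟨hx.1.le, hx.2⟩

lemma tp_nonneg {m : ℝ} (hm : m ∈ Set.Icc (-1:ℝ) 1) (x : ℝ) : 0 ≤ tp m x :=
  div_nonneg (tg_pos m x).le (Z_pos hm).le

lemma tp_le {m : ℝ} (hm : m ∈ Set.Icc (-1:ℝ) 1) (x : ℝ) : tp m x ≤ 3/5 := by
  unfold tp
  calc tg m x / truncGaussZ m ≤ 1 / (5/3) := by
        apply div_le_div₀ (by norm_num) (tg_le_one m x) (by norm_num) (Z_lb hm)
    _ = 3/5 := by norm_num

lemma tp_cont (m : ℝ) : Continuous (tp m) := (tg_cont m).div_const _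

lemma tp_int {m : ℝ} (hm : m ∈ Set.Icc (-1:ℝ) 1) : (∫ x in (-2:ℝ)..2, tp m x) = 1 := by
  unfold tp
  rw [intervalIntegral.integral_div]
  exact div_self (Z_pos hm).ne'

lemma tp_pos {m : ℝ} (hm : m ∈ Set.Icc (-1:ℝ) 1) (x : ℝ) : 0 < tp m x :=
  div_pos (tg_pos m x) (Z_pos hm)

lemma exp92 : Real.exp ((9:ℝ)/2) ≤ 91 := by
  have h1 : Real.exp ((9:ℝ)/2) ^ 2 = Real.exp 9 := by
    rw [sq, ← Real.exp_add]; norm_num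
  have h2 : Real.exp (9:ℝ) = Real.exp 1 ^ (9:ℕ) := by
    rw [← Real.exp_nat_mul]; norm_num
  have h3 : Real.exp 1 ^ (9:ℕ) ≤ 2.7182818286 ^ (9:ℕ) := by
    apply pow_le_pow_left₀ (Real.exp_pos 1).le Real.exp_one_lt_d9.le
  have h4 : (2.7182818286:ℝ) ^ (9:ℕ) ≤ 8281 := by norm_num
  nlinarith [Real.exp_pos ((9:ℝ)/2)]

set_option maxHeartbeats 1600000

/-- Lemma 28 of the paper: for truncated Gaussians `p₁, p₂` on `[-2,2]` with unit variance and
means `μ₁, μ₂ ∈ [-1,1]`, `sup_{x∈[-2,2]} |p₁(x) - p₂(x)| ≤ 36 · D_KL(p₁‖p₂)^{1/6}`. -/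
theorem truncGauss_dist_le_kl_pow {μ₁ μ₂ : ℝ}
    (h₁ : μ₁ ∈ Set.Icc (-1 : ℝ) 1) (h₂ : μ₂ ∈ Set.Icc (-1 : ℝ) 1) :
    ∀ x ∈ Set.Icc (-2 : ℝ) 2,
      |truncGaussPdf μ₁ x - truncGaussPdf μ₂ x|
        ≤ 36 * (∫ x in (-2 : ℝ)..2,
            truncGaussPdf μ₁ x * Real.log (truncGaussPdf μ₁ x / truncGaussPdf μ₂ x))
              ^ ((1 : ℝ) / 6) := by
  intro x hx
  have e1 : truncGaussPdf μ₁ x = tp μ₁ x := by simp [truncGaussPdf, tp, tg, hx]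
  have e2 : truncGaussPdf μ₂ x = tp μ₂ x := by simp [truncGaussPdf, tp, tg, hx]
  rw [e1, e2]
  have hZ₁ : 0 < truncGaussZ μ₁ := Z_pos h₁
  have hZ₂ : 0 < truncGaussZ μ₂ := Z_pos h₂
  have hZ₁l : 5/3 ≤ truncGaussZ μ₁ := Z_lb h₁
  have hZ₂l : 5/3 ≤ truncGaussZ μ₂ := Z_lb h₂
  set Z₁ := truncGaussZ μ₁ with hZ₁def
  set Z₂ := truncGaussZ μ₂ with hZ₂def
  set s := μ₂ - μ₁ with hs
  clear_value s
  have hs2 : s ^ 2 ≤ 4 := by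
    obtain ⟨a1, a2⟩ := h₁; obtain ⟨b1, b2⟩ := h₂; rw [hs]
    have hp : 0 ≤ (μ₂ - μ₁ + 2) * (2 - (μ₂ - μ₁)) :=
      mul_nonneg (by linarith) (by linarith)
    linarith [hp]
  -- continuity / integrability helpers
  have hcp : Continuous (tp μ₁) := tp_cont μ₁
  have hcp2 : Continuous (tp μ₂) := tp_cont μ₂
  have i_tp : IntervalIntegrable (tp μ₁) volume (-2) 2 := hcp.intervalIntegrable _ _
  have i_x_tp : IntervalIntegrable (fun y => y * tp μ₁ y) volume (-2) 2 :=
    (continuous_id.mul hcp).intervalIntegrable _ _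
  set M := ∫ y in (-2:ℝ)..2, y * tp μ₁ y with hM
  clear_value M
  have i_lin : IntervalIntegrable (fun y => (y - M) * tp μ₁ y) volume (-2) 2 :=
    ((continuous_id.sub continuous_const).mul hcp).intervalIntegrable _ _
  have i_sq : IntervalIntegrable (fun y => (y - M) ^ 2 * tp μ₁ y) volume (-2) 2 :=
    (((continuous_id.sub continuous_const).pow 2).mul hcp).intervalIntegrable _ _
  have i_exp : IntervalIntegrable (fun y => tp μ₁ y * Real.exp (s * (y - M))) volume (-2) 2 :=
    (hcp.mul (Real.continuous_exp.comp (continuous_const.mul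
      (continuous_id.sub continuous_const)))).intervalIntegrable _ _
  have i_low : IntervalIntegrable
      (fun y => tp μ₁ y + s * ((y - M) * tp μ₁ y) + s ^ 2 / 50 * ((y - M) ^ 2 * tp μ₁ y))
      volume (-2) 2 :=
    (i_tp.add (i_lin.const_mul s)).add (i_sq.const_mul _)
  -- bounds on M
  have hM2 : |M| ≤ 2 := by
    rw [abs_le]
    constructor
    · have hmono := intervalIntegral.integral_mono_on (μ := volume) (a := (-2:ℝ)) (b := 2)
        (f := fun y => (-2 : ℝ) * tp μ₁ y) (g := fun y => y * tp μ₁ y)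
        (by norm_num) ((continuous_const.mul hcp).intervalIntegrable _ _) i_x_tp
        (fun y hy => by
          have ht := tp_nonneg h₁ y
          have hy1 := hy.1
          show (-2 : ℝ) * tp μ₁ y ≤ y * tp μ₁ y
          linarith [mul_nonneg (show (0:ℝ) ≤ y + 2 by linarith) ht])
      rw [intervalIntegral.integral_const_mul, tp_int h₁] at hmono
      rw [hM]; linarith
    · have hmono := intervalIntegral.integral_mono_on (μ := volume) (a := (-2:ℝ)) (b := 2)
        (f := fun y => y * tp μ₁ y) (g := fun y => (2 : ℝ) * tp μ₁ y)
        (by norm_num) i_x_tp ((continuous_const.mul hcp).intervalIntegrable _ _)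
        (fun y hy => by
          have ht := tp_nonneg h₁ y
          have hy2 := hy.2
          show y * tp μ₁ y ≤ (2 : ℝ) * tp μ₁ y
          linarith [mul_nonneg (show (0:ℝ) ≤ 2 - y by linarith) ht])
      rw [intervalIntegral.integral_const_mul, tp_int h₁] at hmono
      rw [hM]; linarith
  -- second moment integral
  have hsqint : (∫ y in (-2:ℝ)..2, (y - M) ^ 2) = ((2 - M) ^ 3 - (-2 - M) ^ 3) / 3 := by
    rw [intervalIntegral.integral_comp_sub_right (fun t => t ^ 2) M, integral_pow]
    norm_num
  set v := ∫ y in (-2:ℝ)..2, (y - M) ^ 2 * tp μ₁ y with hv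
  clear_value v
  have hvl : 4 / 273 ≤ v := by
    have hlow := intervalIntegral.integral_mono_on (μ := volume) (a := (-2:ℝ)) (b := 2)
      (by norm_num)
      (f := fun y => Real.exp (-(9:ℝ)/2) / 4 * (y - M) ^ 2)
      (g := fun y => (y - M) ^ 2 * tp μ₁ y)
      ((continuous_const.mul ((continuous_id.sub continuous_const).pow 2)).intervalIntegrable _ _) i_sq
      (fun y hy => by
        have hb : Real.exp (-(9:ℝ)/2) / 4 ≤ tp μ₁ y := by
          unfold tp
          exact div_le_div₀ (tg_pos μ₁ y).le (tg_lb h₁ hy) hZ₁ (Z_le_four μ₁)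
        show Real.exp (-(9:ℝ)/2) / 4 * (y - M) ^ 2 ≤ (y - M) ^ 2 * tp μ₁ y
        linarith [mul_le_mul_of_nonneg_right hb (sq_nonneg (y - M))])
    rw [intervalIntegral.integral_const_mul, hsqint] at hlow
    have hexp : (1:ℝ)/91 ≤ Real.exp (-(9:ℝ)/2) := by
      have h := exp92
      have hp := Real.exp_pos (-(9:ℝ)/2)
      have hmul : Real.exp (-(9:ℝ)/2) * Real.exp ((9:ℝ)/2) = 1 := by
        rw [← Real.exp_add]; norm_num
      have h91 : Real.exp (-(9:ℝ)/2) * 91 ≥ Real.exp (-(9:ℝ)/2) * Real.exp ((9:ℝ)/2) :=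
        mul_le_mul_of_nonneg_left h hp.le
      linarith
    have hM2' := abs_le.mp hM2
    have hpoly : (16:ℝ)/3 ≤ ((2 - M) ^ 3 - (-2 - M) ^ 3) / 3 := by
      linarith [sq_nonneg M]
    rw [hv]
    calc (4:ℝ)/273 = (1/91)/4 * (16/3) := by norm_num
      _ ≤ Real.exp (-(9:ℝ)/2) / 4 * (((2 - M) ^ 3 - (-2 - M) ^ 3) / 3) := by
          apply mul_le_mul (by linarith [hexp]) hpoly (by norm_num) (by positivity)
      _ ≤ _ := hlow
  have hvu : v ≤ 16 := by
    have hmono := intervalIntegral.integral_mono_on (μ := volume) (a := (-2:ℝ)) (b := 2)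
      (f := fun y => (y - M) ^ 2 * tp μ₁ y) (g := fun y => (16 : ℝ) * tp μ₁ y)
      (by norm_num) i_sq ((continuous_const.mul hcp).intervalIntegrable _ _)
      (fun y hy => by
        have ht := tp_nonneg h₁ y
        have hM2' := abs_le.mp hM2
        have hy1 := hy.1; have hy2 := hy.2
        show (y - M) ^ 2 * tp μ₁ y ≤ 16 * tp μ₁ y
        have h1 : (0:ℝ) ≤ (4 - (y - M)) * (4 + (y - M)) :=
          mul_nonneg (by linarith) (by linarith)
        have h1' : (0:ℝ) ≤ 16 - (y - M) ^ 2 := by linarith [h1]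
        linarith [mul_nonneg h1' ht])
    rw [intervalIntegral.integral_const_mul, tp_int h₁] at hmono
    rw [hv]; linarith
  have hv0 : 0 ≤ v := by linarith
  -- mean-zero identity
  have hmean : (∫ y in (-2:ℝ)..2, (y - M) * tp μ₁ y) = 0 := by
    have : (fun y => (y - M) * tp μ₁ y) = fun y => y * tp μ₁ y - M * tp μ₁ y :=
      funext fun y => by ring
    rw [this, intervalIntegral.integral_sub i_x_tp (i_tp.const_mul M),
      intervalIntegral.integral_const_mul, tp_int h₁, ← hM]
    ring
  -- the MGF value
  set E := Real.exp (-s * M + (μ₂ ^ 2 - μ₁ ^ 2) / 2) * (Z₂ / Z₁) with hE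
  clear_value E
  have hEeq : (∫ y in (-2:ℝ)..2, tp μ₁ y * Real.exp (s * (y - M))) = E := by
    have hpt : ∀ y : ℝ, tp μ₁ y * Real.exp (s * (y - M))
        = (Real.exp (-s * M + (μ₂ ^ 2 - μ₁ ^ 2) / 2) * (Z₂ / Z₁)) * tp μ₂ y := by
      intro y
      have key : Real.exp (-(y - μ₁) ^ 2 / 2) * Real.exp (s * (y - M))
          = Real.exp (-s * M + (μ₂ ^ 2 - μ₁ ^ 2) / 2) * Real.exp (-(y - μ₂) ^ 2 / 2) := by
        rw [← Real.exp_add, ← Real.exp_add]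
        congr 1
        rw [hs]; ring
      unfold tp tg
      rw [← hZ₁def, ← hZ₂def]
      rw [div_mul_eq_mul_div, key]
      field_simp
    rw [funext hpt, intervalIntegral.integral_const_mul, tp_int h₂, mul_one]
    exact hE.symm
  -- lower bound on E
  have hElb : 1 + s ^ 2 * v / 50 ≤ E := by
    rw [← hEeq]
    have hmono := intervalIntegral.integral_mono_on (μ := volume) (a := (-2:ℝ)) (b := 2)
      (by norm_num) i_low i_exp
      (fun y hy => by
        have hu : -8 ≤ s * (y - M) := by
          have h8 : |s * (y - M)| ≤ 8 := by
            rw [abs_mul]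
            have ha : |s| ≤ 2 := by
              rw [abs_le, hs]; obtain ⟨a1, a2⟩ := h₁; obtain ⟨b1, b2⟩ := h₂
              constructor <;> linarith
            have hb : |y - M| ≤ 4 := by
              have hM2' := abs_le.mp hM2
              rw [abs_le]; obtain ⟨hy1, hy2⟩ := hy
              constructor <;> linarith
            calc |s| * |y - M| ≤ 2 * 4 :=
                  mul_le_mul ha hb (abs_nonneg _) (by norm_num)
              _ = 8 := by norm_num
          linarith [(abs_le.mp h8).1]
        have hq := exp_quad hu
        have ht := tp_nonneg h₁ y
        show tp μ₁ y + s * ((y - M) * tp μ₁ y) + s ^ 2 / 50 * ((y - M) ^ 2 * tp μ₁ y)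
          ≤ tp μ₁ y * Real.exp (s * (y - M))
        linarith [mul_le_mul_of_nonneg_left hq ht])
    rw [intervalIntegral.integral_add (i_tp.add (i_lin.const_mul s)) (i_sq.const_mul _),
      intervalIntegral.integral_add i_tp (i_lin.const_mul s),
      intervalIntegral.integral_const_mul, intervalIntegral.integral_const_mul,
      tp_int h₁, hmean, ← hv] at hmono
    calc 1 + s ^ 2 * v / 50 = 1 + s * 0 + s ^ 2 / 50 * v := by ring
      _ ≤ _ := hmono
  have hE0 : (0:ℝ) < 1 + s ^ 2 * v / 50 := by positivity
  -- KL value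
  set A := (μ₂ ^ 2 - μ₁ ^ 2) / 2 + Real.log Z₂ - Real.log Z₁ with hA
  clear_value A
  set D := ∫ y in (-2:ℝ)..2, truncGaussPdf μ₁ y * Real.log (truncGaussPdf μ₁ y / truncGaussPdf μ₂ y)
    with hDdef
  clear_value D
  have hDeq : D = (μ₁ - μ₂) * M + A := by
    have hcong : Set.EqOn
        (fun y => truncGaussPdf μ₁ y * Real.log (truncGaussPdf μ₁ y / truncGaussPdf μ₂ y))
        (fun y => (μ₁ - μ₂) * (y * tp μ₁ y) + A * tp μ₁ y) (Set.uIcc (-2:ℝ) 2) := by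
      intro y hy
      rw [Set.uIcc_of_le (by norm_num : (-2:ℝ) ≤ 2)] at hy
      have f1 : truncGaussPdf μ₁ y = tp μ₁ y := by simp [truncGaussPdf, tp, tg, hy]
      have f2 : truncGaussPdf μ₂ y = tp μ₂ y := by simp [truncGaussPdf, tp, tg, hy]
      simp only [f1, f2]
      have hlog : Real.log (tp μ₁ y / tp μ₂ y) = (μ₁ - μ₂) * y + A := by
        unfold tp tg
        rw [Real.log_div (by positivity) (by positivity),
          Real.log_div (Real.exp_ne_zero _) hZ₁.ne', Real.log_div (Real.exp_ne_zero _) hZ₂.ne',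
          Real.log_exp, Real.log_exp, hA]
        ring
      rw [hlog]; ring
    rw [hDdef, intervalIntegral.integral_congr hcong,
      intervalIntegral.integral_add (i_x_tp.const_mul _) (i_tp.const_mul A),
      intervalIntegral.integral_const_mul, intervalIntegral.integral_const_mul,
      tp_int h₁, ← hM]
    ring
  have hDlog : D = Real.log E := by
    rw [hDeq, hE, Real.log_mul (Real.exp_ne_zero _) (by positivity), Real.log_exp,
      Real.log_div hZ₂.ne' hZ₁.ne', hA, hs]
    ring
  -- lower bound on D
  have hlog1 : Real.log (1 + s ^ 2 * v / 50) ≤ D := by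
    rw [hDlog]
    exact Real.log_le_log hE0 hElb
  have hlb : (s ^ 2 * v / 50) / (1 + s ^ 2 * v / 50) ≤ Real.log (1 + s ^ 2 * v / 50) := by
    have h := Real.log_le_sub_one_of_pos (show (0:ℝ) < (1 + s ^ 2 * v / 50)⁻¹ by positivity)
    rw [Real.log_inv] at h
    have hid : (1 + s ^ 2 * v / 50)⁻¹ - 1 = -((s ^ 2 * v / 50) / (1 + s ^ 2 * v / 50)) := by
      field_simp
      ring
    rw [hid] at h
    linarith
  have ht0 : 0 ≤ s ^ 2 * v / 50 := by positivity
  have ht1 : s ^ 2 * v / 50 ≤ 32 / 25 := by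
    have h64 : s ^ 2 * v ≤ 64 := by
      calc s ^ 2 * v ≤ 4 * 16 := mul_le_mul hs2 hvu hv0 (by norm_num)
        _ = 64 := by norm_num
    linarith
  have hkey : (s ^ 2 * v / 50) * (25 / 57) ≤ (s ^ 2 * v / 50) / (1 + s ^ 2 * v / 50) := by
    rw [le_div_iff₀ hE0]
    linarith [mul_nonneg ht0 (show (0:ℝ) ≤ 32/25 - s ^ 2 * v / 50 by linarith)]
  have hD0 : 0 ≤ D := le_trans (by positivity) (le_trans hkey (le_trans hlb hlog1))
  have hslb : s ^ 2 ≤ 7781 * D := by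
    have hDlb : s ^ 2 * v / 114 ≤ D := by
      have := le_trans hkey (le_trans hlb hlog1)
      linarith
    have hlow2 : s ^ 2 * (4/273) ≤ s ^ 2 * v :=
      mul_le_mul_of_nonneg_left hvl (sq_nonneg s)
    linarith
  -- pointwise difference bounds
  have hdiff1 : |tp μ₁ x - tp μ₂ x| ≤ 6 / 5 := by
    have b1 := tp_le h₁ x; have b2 := tp_le h₂ x
    have b3 := tp_nonneg h₁ x; have b4 := tp_nonneg h₂ x
    rw [abs_le]; constructor <;> linarith
  have habs : |μ₁ - μ₂| = |s| := by rw [hs, abs_sub_comm]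
  have hdiff2 : |tp μ₁ x - tp μ₂ x| ≤ 7 * |s| := by
    have hid : tp μ₁ x - tp μ₂ x
        = (tg μ₁ x - tg μ₂ x) / Z₁ + tg μ₂ x * (Z₂ - Z₁) / (Z₁ * Z₂) := by
      unfold tp; rw [← hZ₁def, ← hZ₂def]; field_simp; ring
    rw [hid]
    have hb1 : |(tg μ₁ x - tg μ₂ x) / Z₁| ≤ 3 * |s| / (5 / 3) := by
      rw [abs_div, abs_of_pos hZ₁, ← habs]
      exact div_le_div₀ (by positivity) (tg_lip h₁ h₂ hx) (by norm_num) hZ₁l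
    have hb2 : |tg μ₂ x * (Z₂ - Z₁) / (Z₁ * Z₂)| ≤ 1 * (12 * |s|) / (5 / 3 * (5 / 3)) := by
      rw [abs_div, abs_mul, abs_of_pos (mul_pos hZ₁ hZ₂)]
      apply div_le_div₀ (by positivity) ?_ (by norm_num) ?_
      · apply mul_le_mul _ _ (abs_nonneg _) (by norm_num)
        · rw [abs_of_pos (tg_pos μ₂ x)]; exact tg_le_one μ₂ x
        · rw [abs_sub_comm, ← habs]
          exact Z_lip h₁ h₂
      · exact mul_le_mul hZ₁l hZ₂l (by norm_num) (by positivity)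
    have := abs_add_le ((tg μ₁ x - tg μ₂ x) / Z₁) (tg μ₂ x * (Z₂ - Z₁) / (Z₁ * Z₂))
    have hsn : 0 ≤ |s| := abs_nonneg s
    calc |(tg μ₁ x - tg μ₂ x) / Z₁ + tg μ₂ x * (Z₂ - Z₁) / (Z₁ * Z₂)|
        ≤ |(tg μ₁ x - tg μ₂ x) / Z₁| + |tg μ₂ x * (Z₂ - Z₁) / (Z₁ * Z₂)| := abs_add_le _ _
      _ ≤ 3 * |s| / (5 / 3) + 1 * (12 * |s|) / (5 / 3 * (5 / 3)) := add_le_add hb1 hb2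
      _ = (153 / 25) * |s| := by ring
      _ ≤ 7 * |s| := by linarith
  -- conclusion
  set r := D ^ ((1:ℝ) / 6) with hr
  clear_value r
  have hr0 : 0 ≤ r := by rw [hr]; exact Real.rpow_nonneg hD0 _
  have hr6 : r ^ (6:ℕ) = D := by
    rw [hr, ← Real.rpow_natCast (D ^ ((1:ℝ)/6)) 6, ← Real.rpow_mul hD0]
    norm_num
  rcases le_or_gt (1/30 : ℝ) r with hc | hc
  · calc |tp μ₁ x - tp μ₂ x| ≤ 6 / 5 := hdiff1
      _ ≤ 36 * r := by linarith
  · have hs7 : s ^ 2 ≤ 7781 * r ^ 6 := by rw [hr6]; exact hslb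
    have hr2 : r ^ 2 ≤ 1 / 900 := by
      linarith [mul_le_mul hc.le hc.le hr0 (show (0:ℝ) ≤ 1/30 by norm_num)]
    have hr4 : r ^ 4 ≤ 1 / 810000 := by
      have := mul_le_mul hr2 hr2 (sq_nonneg r) (by norm_num)
      calc r ^ 4 = r ^ 2 * r ^ 2 := by ring
        _ ≤ 1/900 * (1/900) := this
        _ = 1 / 810000 := by norm_num
    have h49 : 49 * s ^ 2 ≤ 1296 * r ^ 2 := by
      have hm := mul_le_mul_of_nonneg_left hr4 (sq_nonneg r)
      have he : r ^ 6 = r ^ 2 * r ^ 4 := by ring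
      linarith
    have h7 : 7 * |s| ≤ 36 * r := by
      have hsq : (7 * |s|) ^ 2 ≤ (36 * r) ^ 2 := by
        have e1 : (7 * |s|) ^ 2 = 49 * s ^ 2 := by rw [mul_pow, sq_abs]; norm_num
        have e2 : (36 * r) ^ 2 = 1296 * r ^ 2 := by ring
        linarith
      have h2 : (0:ℝ) ≤ 36 * r := by positivity
      by_contra hcon
      push_neg at hcon
      have hlt := mul_self_lt_mul_self h2 hcon
      have e3 : (36 * r) * (36 * r) = (36 * r) ^ 2 := by ring
      have e4 : (7 * |s|) * (7 * |s|) = (7 * |s|) ^ 2 := by ring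
      linarith
    calc |tp μ₁ x - tp μ₂ x| ≤ 7 * |s| := hdiff2
      _ ≤ 36 * r := h7
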